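/- Let x_0, ..., x_n be affinely independent points in ℝ^n with convex hull σ, and let c_j = (n/2)·‖x_j − x_0‖₂·(max_k ‖x_k − x_0‖₂ + ‖x_j − x_0‖₂). Let f : ℝ^n → ℝ^n be twice continuously differentiable on a neighborhood of σ with all second partial derivatives of all components bounded in absolute value by β on σ, and let G : ℝ^n → ℝ^{n×m} be continuous with ‖G(x)‖_∞ ≤ ĝ for all x ∈ σ, where ‖·‖_∞ is the induced ∞-norm. Let w ∈ ℝ^n, let l̂ ∈ ℝ satisfy ‖w‖₁ ≤ l̂, let û > 0 and b₂ ∈ ℝ. If f(x_j) · w + l̂·(β c_j + ĝ û) ≤ −b₂ for every vertex j = 0, ..., n, then for every x ∈ σ and every u ∈ ℝ^m with ‖u‖_∞ ≤ û: w · (f(x) + G(x) u) ≤ −b₂. -/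

import Mathlib

open scoped BigOperators

/-- The second partial derivative `∂²φ/∂x^(q)∂x^(r)` of a scalar function on `ℝ^n`. -/
noncomputable def secondPartial {n : ℕ} (φ : EuclideanSpace ℝ (Fin n) → ℝ)
    (ξ : EuclideanSpace ℝ (Fin n)) (q r : Fin n) : ℝ :=
  fderiv ℝ (fun z => fderiv ℝ φ z (EuclideanSpace.single q (1 : ℝ))) ξ
    (EuclideanSpace.single r (1 : ℝ))

/-- The constant `c_j = (n/2)·‖x_j − x_0‖₂·(max_{k∈{1,…,n}} ‖x_k − x_0‖₂ + ‖x_j − x_0‖₂)`. -/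
noncomputable def simplexConst {n : ℕ} (x : Fin (n + 1) → EuclideanSpace ℝ (Fin n))
    (j : Fin (n + 1)) : ℝ :=
  ((n : ℝ) / 2) * ‖x j - x 0‖ * ((⨆ k : Fin n, ‖x k.succ - x 0‖) + ‖x j - x 0‖)

/-- The operator norm induced by the vector `∞`-norm: the maximum absolute row sum. -/
noncomputable def matInfNorm {n m : ℕ} (A : Matrix (Fin n) (Fin m) ℝ) : ℝ :=
  ⨆ i, ∑ j, |A i j|

/-!
Affine maps commute with convex combinations, so for each component `f_p` the Jensen gap
`f_p(Σ λ_j x_j) − Σ λ_j f_p(x_j)` equals the Jensen gap of the first-order Taylor remainder of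
`f_p` at `x_0`. Along segments in the simplex that remainder is at most
`(β/2)‖y − x_0‖₁² ≤ (nβ/2)‖y − x_0‖₂²`, and
`‖Σ λ_j x_j − x_0‖₂ ≤ Σ λ_j ‖x_j − x_0‖₂ ≤ max_k ‖x_k − x_0‖₂`, so the gap is at most
`β Σ λ_j c_j`. Pairing with `w` costs a factor `‖w‖₁ ≤ l̂`, the input term is at most `l̂ ĝ û`,
and averaging the vertex conditions with the weights `λ_j` gives the bound.
-/

section Taylor

variable {E F : Type*} [NormedAddCommGroup E] [NormedSpace ℝ E]
  [NormedAddCommGroup F] [NormedSpace ℝ F]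

theorem Convex.norm_sub_sub_fderiv_le_of_norm_fderiv_fderiv_le {K : Set E} (hK : Convex ℝ K)
    {φ : E → F} {φ' : E → E →L[ℝ] F} {φ'' : E → E →L[ℝ] E →L[ℝ] F}
    (hφ : ∀ z ∈ K, HasFDerivAt φ (φ' z) z) (hφ' : ∀ z ∈ K, HasFDerivAt φ' (φ'' z) z)
    {x y : E} (hx : x ∈ K) (hy : y ∈ K) {C : ℝ}
    (hC : ∀ z ∈ K, ‖φ'' z (y - x) (y - x)‖ ≤ C) :
    ‖φ y - φ x - φ' x (y - x)‖ ≤ C / 2 := by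
  set v := y - x
  set γ : ℝ → E := fun t => x + t • v
  have hγK : ∀ t ∈ Set.Icc (0 : ℝ) 1, γ t ∈ K := fun t ht => hK.add_smul_sub_mem hx hy ht
  have hγ : ∀ t, HasDerivAt γ v t := fun t => by
    simpa only [one_smul] using ((hasDerivAt_id' t).smul_const v).const_add x
  have hdφ' : ∀ t ∈ Set.Icc (0 : ℝ) 1, HasDerivAt (fun t => φ' (γ t) v) (φ'' (γ t) v v) t :=
    fun t ht => by
      simpa using ((hφ' _ (hγK t ht)).comp_hasDerivAt t (hγ t)).clm_apply (hasDerivAt_const t v)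
  have hφ'_sub : ∀ t ∈ Set.Icc (0 : ℝ) 1, ‖φ' (γ t) v - φ' x v‖ ≤ C * t := fun t ht => by
    simpa [γ, Real.norm_eq_abs, abs_of_nonneg ht.1] using
      (convex_Icc (0 : ℝ) 1).norm_image_sub_le_of_norm_hasDerivWithin_le
        (fun s hs => (hdφ' s hs).hasDerivWithinAt) (fun s hs => hC _ (hγK s hs))
        (Set.left_mem_Icc.2 zero_le_one) ht
  have hr : ∀ t ∈ Set.Icc (0 : ℝ) 1,
      HasDerivAt (fun t => φ (γ t) - φ x - t • φ' x v) (φ' (γ t) v - φ' x v) t := fun t ht => by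
    simpa only [one_smul, Function.comp_def] using
      (((hφ _ (hγK t ht)).comp_hasDerivAt t (hγ t)).sub_const (φ x)).fun_sub
        ((hasDerivAt_id' t).smul_const (φ' x v))
  -- `t ↦ φ (γ t) - φ x - t • φ' x v` vanishes at `0` and has derivative of norm `≤ C t`,
  -- so it is fenced by `C t² / 2`.
  have := image_norm_le_of_norm_deriv_right_le_deriv_boundary
    (f := fun t => φ (γ t) - φ x - t • φ' x v) (a := 0) (b := 1)
    (B := fun t => C / 2 * t ^ 2) (B' := fun t => C * t)
    (fun t ht => (hr t ht).continuousAt.continuousWithinAt)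
    (fun t ht => (hr t (Set.Ico_subset_Icc_self ht)).hasDerivWithinAt) (by simp [γ])
    (fun t => ((hasDerivAt_pow 2 t).const_mul (C / 2)).congr_deriv (by ring))
    (fun t ht => hφ'_sub t (Set.Ico_subset_Icc_self ht)) (Set.right_mem_Icc.2 zero_le_one)
  simpa [γ, v] using this

end Taylor

section Euclidean

variable {ι : Type*} [Fintype ι]

theorem EuclideanSpace.sq_sum_abs_le_card_mul_sq_norm (v : EuclideanSpace ℝ ι) :
    (∑ q, |v q|) ^ 2 ≤ Fintype.card ι * ‖v‖ ^ 2 := by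
  rw [EuclideanSpace.norm_sq_eq]
  simpa [Real.norm_eq_abs] using sq_sum_le_card_mul_sum_sq (s := Finset.univ) (f := fun q => |v q|)

theorem EuclideanSpace.mul_sq_sum_abs_le {β : ℝ} (hβ : 0 ≤ β * Fintype.card ι)
    (v : EuclideanSpace ℝ ι) : β * (∑ q, |v q|) ^ 2 ≤ β * Fintype.card ι * ‖v‖ ^ 2 := by
  rcases (Fintype.card ι).eq_zero_or_pos with h | h
  · have : IsEmpty ι := Fintype.card_eq_zero_iff.mp h
    simp
  · rw [mul_assoc]
    exact mul_le_mul_of_nonneg_left (sq_sum_abs_le_card_mul_sq_norm v)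
      (nonneg_of_mul_nonneg_left hβ (by exact_mod_cast h))

variable [DecidableEq ι]

theorem EuclideanSpace.apply_apply_self_eq_sum
    (B : EuclideanSpace ℝ ι →L[ℝ] EuclideanSpace ℝ ι →L[ℝ] ℝ) (v : EuclideanSpace ℝ ι) :
    B v v = ∑ r, ∑ q, v r * v q * B (single r 1) (single q 1) := by
  conv_lhs => rw [← (EuclideanSpace.basisFun ι ℝ).sum_repr v]
  simp only [map_sum, map_smul, EuclideanSpace.basisFun_apply, EuclideanSpace.basisFun_repr,
    FunLike.coe_sum, FunLike.coe_smul, Finset.sum_apply, Pi.smul_apply, smul_eq_mul,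
    Finset.mul_sum]
  rw [Finset.sum_comm]
  exact Finset.sum_congr rfl fun _ _ => Finset.sum_congr rfl fun _ _ => by ring

theorem EuclideanSpace.abs_apply_apply_self_le
    (B : EuclideanSpace ℝ ι →L[ℝ] EuclideanSpace ℝ ι →L[ℝ] ℝ) {β : ℝ}
    (hB : ∀ r q, |B (single r 1) (single q 1)| ≤ β) (v : EuclideanSpace ℝ ι) :
    |B v v| ≤ β * (∑ q, |v q|) ^ 2 := by
  rw [apply_apply_self_eq_sum, sq, Finset.sum_mul_sum, Finset.mul_sum]
  refine (Finset.abs_sum_le_sum_abs _ _).trans (Finset.sum_le_sum fun r _ => ?_)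
  rw [Finset.mul_sum]
  refine (Finset.abs_sum_le_sum_abs _ _).trans (Finset.sum_le_sum fun q _ => ?_)
  rw [abs_mul, abs_mul, mul_comm β]
  exact mul_le_mul_of_nonneg_left (hB r q) (by positivity)

end Euclidean

theorem secondPartial_eq_fderiv_fderiv {n : ℕ} {φ : EuclideanSpace ℝ (Fin n) → ℝ}
    {ξ : EuclideanSpace ℝ (Fin n)} (h : DifferentiableAt ℝ (fderiv ℝ φ) ξ) (q r : Fin n) :
    secondPartial φ ξ q r
      = fderiv ℝ (fderiv ℝ φ) ξ (EuclideanSpace.single r 1) (EuclideanSpace.single q 1) := by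
  rw [secondPartial, fderiv_clm_apply h (differentiableAt_const _)]
  simp

theorem mul_natCast_nonneg_of_forall_abs_le {n : ℕ} {a : Fin n → ℝ} {β : ℝ}
    (h : ∀ q, |a q| ≤ β) : 0 ≤ β * n := by
  rcases n.eq_zero_or_pos with rfl | hn
  · simp
  · exact mul_nonneg ((abs_nonneg _).trans (h ⟨0, hn⟩)) n.cast_nonneg

theorem abs_sub_sub_fderiv_le_of_abs_secondPartial_le {n : ℕ}
    {U K : Set (EuclideanSpace ℝ (Fin n))} (hU : IsOpen U) (hK : Convex ℝ K) (hKU : K ⊆ U)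
    {φ : EuclideanSpace ℝ (Fin n) → ℝ} (hφ : ContDiffOn ℝ 2 φ U) {β : ℝ}
    (hβ : ∀ ξ ∈ K, ∀ q r, |secondPartial φ ξ q r| ≤ β)
    {x y : EuclideanSpace ℝ (Fin n)} (hx : x ∈ K) (hy : y ∈ K) :
    |φ y - φ x - fderiv ℝ φ x (y - x)| ≤ β * (∑ q, |(y - x) q|) ^ 2 / 2 := by
  have hφK : ∀ z ∈ K, ContDiffAt ℝ 2 φ z := fun z hz => hφ.contDiffAt (hU.mem_nhds (hKU hz))
  have hdφ' : ∀ z ∈ K, DifferentiableAt ℝ (fderiv ℝ φ) z := fun z hz =>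
    ((hφK z hz).fderiv_right (m := 1) (by norm_num)).differentiableAt (by norm_num)
  simpa only [Real.norm_eq_abs] using hK.norm_sub_sub_fderiv_le_of_norm_fderiv_fderiv_le
    (fun z hz => ((hφK z hz).differentiableAt (by norm_num)).hasFDerivAt)
    (fun z hz => (hdφ' z hz).hasFDerivAt) hx hy fun z hz =>
      EuclideanSpace.abs_apply_apply_self_le _
        (fun r q => secondPartial_eq_fderiv_fderiv (hdφ' z hz) q r ▸ hβ z hz q r) _

section JensenGap

variable {E ι : Type*} [NormedAddCommGroup E] [NormedSpace ℝ E] [Fintype ι]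

variable {lam : ι → ℝ}

theorem sum_smul_sub_eq_sum_smul_sub (hlam1 : ∑ j, lam j = 1) (p : ι → E) (x₀ : E) :
    ∑ j, lam j • p j - x₀ = ∑ j, lam j • (p j - x₀) := by
  simp [smul_sub, Finset.sum_sub_distrib, ← Finset.sum_smul, hlam1]

theorem sq_norm_sum_smul_sub_le (hlam0 : ∀ j, 0 ≤ lam j) (hlam1 : ∑ j, lam j = 1)
    {p : ι → E} {x₀ : E} {M : ℝ} (hM : ∀ j, ‖p j - x₀‖ ≤ M) :
    ‖∑ j, lam j • p j - x₀‖ ^ 2 ≤ ∑ j, lam j * (‖p j - x₀‖ * M) := by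
  have hS : ‖∑ j, lam j • p j - x₀‖ ≤ ∑ j, lam j * ‖p j - x₀‖ := by
    rw [sum_smul_sub_eq_sum_smul_sub hlam1]
    refine (norm_sum_le _ _).trans_eq (Finset.sum_congr rfl fun j _ => ?_)
    rw [norm_smul, Real.norm_of_nonneg (hlam0 j)]
  have hSM : ∑ j, lam j * ‖p j - x₀‖ ≤ M := calc
    ∑ j, lam j * ‖p j - x₀‖ ≤ ∑ j, lam j * M :=
      Finset.sum_le_sum fun j _ => mul_le_mul_of_nonneg_left (hM j) (hlam0 j)
    _ = M := by rw [← Finset.sum_mul, hlam1, one_mul]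
  calc ‖∑ j, lam j • p j - x₀‖ ^ 2 ≤ (∑ j, lam j * ‖p j - x₀‖) * M := by
        rw [sq]
        exact mul_le_mul hS (hS.trans hSM) (norm_nonneg _)
          (Finset.sum_nonneg fun j _ => mul_nonneg (hlam0 j) (norm_nonneg _))
    _ = ∑ j, lam j * (‖p j - x₀‖ * M) := by
        rw [Finset.sum_mul]
        exact Finset.sum_congr rfl fun j _ => mul_assoc _ _ _

theorem jensenGap_eq_jensenGap_sub_affine (hlam1 : ∑ j, lam j = 1) (φ : E → ℝ)
    (ℓ : E →L[ℝ] ℝ) (x₀ : E) (p : ι → E) :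
    φ (∑ j, lam j • p j) - ∑ j, lam j * φ (p j)
      = (φ (∑ j, lam j • p j) - φ x₀ - ℓ (∑ j, lam j • p j - x₀))
        - ∑ j, lam j * (φ (p j) - φ x₀ - ℓ (p j - x₀)) := by
  simp only [mul_sub, Finset.sum_sub_distrib, ← Finset.sum_mul, hlam1,
    sum_smul_sub_eq_sum_smul_sub hlam1, map_sum, map_smul, smul_eq_mul]
  ring

theorem abs_jensenGap_le_of_abs_remainder_le (hlam0 : ∀ j, 0 ≤ lam j) (hlam1 : ∑ j, lam j = 1)
    (φ : E → ℝ) (ℓ : E →L[ℝ] ℝ) (x₀ : E) (p : ι → E) {κ M : ℝ} (hκ : 0 ≤ κ)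
    (hR : ∀ y ∈ convexHull ℝ (Set.range p), |φ y - φ x₀ - ℓ (y - x₀)| ≤ κ * ‖y - x₀‖ ^ 2)
    (hM : ∀ j, ‖p j - x₀‖ ≤ M) :
    |φ (∑ j, lam j • p j) - ∑ j, lam j * φ (p j)|
      ≤ ∑ j, lam j * (κ * (‖p j - x₀‖ * (M + ‖p j - x₀‖))) := by
  set R := fun y => φ y - φ x₀ - ℓ (y - x₀)
  set xb := ∑ j, lam j • p j
  have hp : ∀ j, p j ∈ convexHull ℝ (Set.range p) := fun j => subset_convexHull ℝ _ ⟨j, rfl⟩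
  have hxb : xb ∈ convexHull ℝ (Set.range p) :=
    (convex_convexHull ℝ _).sum_mem (fun j _ => hlam0 j) hlam1 fun j _ => hp j
  rw [jensenGap_eq_jensenGap_sub_affine hlam1 φ ℓ x₀ p]
  calc |R xb - ∑ j, lam j * R (p j)| ≤ |R xb| + ∑ j, lam j * |R (p j)| := by
        refine (abs_sub _ _).trans (add_le_add le_rfl ?_)
        refine (Finset.abs_sum_le_sum_abs _ _).trans_eq (Finset.sum_congr rfl fun j _ => ?_)
        rw [abs_mul, abs_of_nonneg (hlam0 j)]
    _ ≤ κ * ‖xb - x₀‖ ^ 2 + ∑ j, lam j * (κ * ‖p j - x₀‖ ^ 2) := by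
        gcongr with j
        · exact hR xb hxb
        · exact hlam0 j
        · exact hR (p j) (hp j)
    _ ≤ κ * ∑ j, lam j * (‖p j - x₀‖ * M) + ∑ j, lam j * (κ * ‖p j - x₀‖ ^ 2) := by
        gcongr
        exact sq_norm_sum_smul_sub_le hlam0 hlam1 hM
    _ = ∑ j, lam j * (κ * (‖p j - x₀‖ * (M + ‖p j - x₀‖))) := by
        rw [Finset.mul_sum, ← Finset.sum_add_distrib]
        exact Finset.sum_congr rfl fun j _ => by ring

end JensenGap

theorem norm_sub_le_iSup_norm_succ_sub {E : Type*} [SeminormedAddCommGroup E] {n : ℕ}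
    (x : Fin (n + 1) → E) (j : Fin (n + 1)) : ‖x j - x 0‖ ≤ ⨆ k : Fin n, ‖x k.succ - x 0‖ := by
  cases j using Fin.cases with
  | zero => simpa using Real.iSup_nonneg fun k : Fin n => norm_nonneg (x k.succ - x 0)
  | succ k => exact le_ciSup (Finite.bddAbove_range fun k : Fin n => ‖x k.succ - x 0‖) k

theorem mul_simplexConst {n : ℕ} (x : Fin (n + 1) → EuclideanSpace ℝ (Fin n)) (β : ℝ)
    (j : Fin (n + 1)) : β * simplexConst x j
      = β * n / 2 * (‖x j - x 0‖ * ((⨆ k : Fin n, ‖x k.succ - x 0‖) + ‖x j - x 0‖)) := by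
  rw [simplexConst]
  ring

theorem mul_simplexConst_nonneg {n : ℕ} (x : Fin (n + 1) → EuclideanSpace ℝ (Fin n)) {β : ℝ}
    (hβ : 0 ≤ β * n) (j : Fin (n + 1)) : 0 ≤ β * simplexConst x j := by
  have hM := (norm_nonneg _).trans (norm_sub_le_iSup_norm_succ_sub x 0)
  rw [mul_simplexConst]
  positivity

theorem abs_jensenGap_le_sum_mul_simplexConst {n : ℕ}
    {x : Fin (n + 1) → EuclideanSpace ℝ (Fin n)} {U : Set (EuclideanSpace ℝ (Fin n))}
    (hU : IsOpen U) (hσU : convexHull ℝ (Set.range x) ⊆ U)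
    {φ : EuclideanSpace ℝ (Fin n) → ℝ} (hφ : ContDiffOn ℝ 2 φ U) {β : ℝ}
    (hβ : ∀ ξ ∈ convexHull ℝ (Set.range x), ∀ q r, |secondPartial φ ξ q r| ≤ β)
    {lam : Fin (n + 1) → ℝ} (hlam0 : ∀ j, 0 ≤ lam j) (hlam1 : ∑ j, lam j = 1) :
    |φ (∑ j, lam j • x j) - ∑ j, lam j * φ (x j)| ≤ ∑ j, lam j * (β * simplexConst x j) := by
  have hx₀ : x 0 ∈ convexHull ℝ (Set.range x) := subset_convexHull ℝ _ ⟨0, rfl⟩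
  have hβn : 0 ≤ β * n := mul_natCast_nonneg_of_forall_abs_le fun q => hβ (x 0) hx₀ q q
  simp only [mul_simplexConst]
  refine abs_jensenGap_le_of_abs_remainder_le hlam0 hlam1 φ (fderiv ℝ φ (x 0)) (x 0) x
    (by linarith) (fun y hy => ?_) (norm_sub_le_iSup_norm_succ_sub x)
  have hT := abs_sub_sub_fderiv_le_of_abs_secondPartial_le hU (convex_convexHull ℝ _) hσU hφ hβ
    hx₀ hy
  have hE := EuclideanSpace.mul_sq_sum_abs_le (by simpa using hβn) (y - x 0)
  rw [Fintype.card_fin] at hE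
  linarith

theorem abs_sum_mul_le_mul_of_sum_abs_le {ι : Type*} (s : Finset ι) {w a : ι → ℝ} {l D : ℝ}
    (hw : ∑ k ∈ s, |w k| ≤ l) (hD : 0 ≤ D) (ha : ∀ k ∈ s, |a k| ≤ D) :
    |∑ k ∈ s, w k * a k| ≤ l * D := calc
  |∑ k ∈ s, w k * a k| ≤ ∑ k ∈ s, |w k| * D :=
    (Finset.abs_sum_le_sum_abs _ _).trans <| Finset.sum_le_sum fun k hk => by
      rw [abs_mul]
      exact mul_le_mul_of_nonneg_left (ha k hk) (abs_nonneg _)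
  _ ≤ l * D := by
    rw [← Finset.sum_mul]
    exact mul_le_mul_of_nonneg_right hw hD

theorem sum_mul_le_sum_mul_sum_add_of_abs_sub_le {ι κ : Type*} [Fintype ι] [Fintype κ]
    {w a : κ → ℝ} {b : ι → κ → ℝ} {lam : ι → ℝ} {l D : ℝ} (hw : ∑ k, |w k| ≤ l) (hD : 0 ≤ D)
    (hab : ∀ k, |a k - ∑ j, lam j * b j k| ≤ D) :
    ∑ k, w k * a k ≤ ∑ j, lam j * ∑ k, b j k * w k + l * D := by
  have hswap : ∑ j, lam j * ∑ k, b j k * w k = ∑ k, w k * ∑ j, lam j * b j k := by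
    simp only [Finset.mul_sum]
    rw [Finset.sum_comm]
    exact Finset.sum_congr rfl fun _ _ => Finset.sum_congr rfl fun _ _ => by ring
  have := (le_abs_self _).trans (abs_sum_mul_le_mul_of_sum_abs_le _ hw hD fun k _ => hab k)
  simp only [mul_sub, Finset.sum_sub_distrib] at this
  linarith

theorem matInfNorm_nonneg {n m : ℕ} (A : Matrix (Fin n) (Fin m) ℝ) : 0 ≤ matInfNorm A :=
  Real.iSup_nonneg fun _ => Finset.sum_nonneg fun _ _ => abs_nonneg _

theorem abs_mulVec_le_matInfNorm_mul {n m : ℕ} (A : Matrix (Fin n) (Fin m) ℝ) {u : Fin m → ℝ}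
    {c : ℝ} (hc : 0 ≤ c) (hu : ∀ i, |u i| ≤ c) (k : Fin n) :
    |A.mulVec u k| ≤ matInfNorm A * c := by
  simpa only [Matrix.mulVec, dotProduct, matInfNorm] using abs_sum_mul_le_mul_of_sum_abs_le _
    (le_ciSup (Finite.bddAbove_range fun i => ∑ j, |A i j|) k) hc fun i _ => hu i

theorem barrier_vertex_bound_general (n m : ℕ) (x : Fin (n + 1) → EuclideanSpace ℝ (Fin n))
    (f : EuclideanSpace ℝ (Fin n) → (Fin n → ℝ)) (β : ℝ)
    (U : Set (EuclideanSpace ℝ (Fin n))) (hU : IsOpen U)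
    (hσU : convexHull ℝ (Set.range x) ⊆ U)
    (hf : ContDiffOn ℝ 2 f U)
    (hβ : ∀ ξ ∈ convexHull ℝ (Set.range x), ∀ p q r : Fin n,
      |secondPartial (fun z => f z p) ξ q r| ≤ β)
    (G : EuclideanSpace ℝ (Fin n) → Matrix (Fin n) (Fin m) ℝ)
    (ghat : ℝ) (hghat : ∀ z ∈ convexHull ℝ (Set.range x), matInfNorm (G z) ≤ ghat)
    (w : Fin n → ℝ) (lhat : ℝ) (hlhat : (∑ k, |w k|) ≤ lhat)
    (uhat b₂ : ℝ) (huhat : 0 < uhat)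
    (hvert : ∀ j : Fin (n + 1),
      (∑ k, f (x j) k * w k) + lhat * (β * simplexConst x j + ghat * uhat) ≤ -b₂)
    (lam : Fin (n + 1) → ℝ) (hlam0 : ∀ j, 0 ≤ lam j) (hlam1 : ∑ j, lam j = 1)
    (u : Fin m → ℝ) (hu : ∀ i, |u i| ≤ uhat) :
    (∑ k, w k * (f (∑ j, lam j • x j) k + (G (∑ j, lam j • x j)).mulVec u k)) ≤ -b₂ := by
  set xb := ∑ j, lam j • x j
  have hxbσ : xb ∈ convexHull ℝ (Set.range x) := (convex_convexHull ℝ _).sum_mem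
    (fun j _ => hlam0 j) hlam1 fun j _ => subset_convexHull ℝ _ ⟨j, rfl⟩
  have hβn : 0 ≤ β * n := mul_natCast_nonneg_of_forall_abs_le fun q =>
    hβ (x 0) (subset_convexHull ℝ _ ⟨0, rfl⟩) q q q
  have hdrift : ∑ k, w k * f xb k
      ≤ ∑ j, lam j * ∑ k, f (x j) k * w k + lhat * ∑ j, lam j * (β * simplexConst x j) :=
    sum_mul_le_sum_mul_sum_add_of_abs_sub_le hlhat
      (Finset.sum_nonneg fun j _ => mul_nonneg (hlam0 j) (mul_simplexConst_nonneg x hβn j))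
      fun p => abs_jensenGap_le_sum_mul_simplexConst hU hσU (contDiffOn_pi.mp hf p)
        (fun ξ hξ => hβ ξ hξ p) hlam0 hlam1
  have hinput : ∑ k, w k * (G xb).mulVec u k ≤ lhat * (ghat * uhat) :=
    (le_abs_self _).trans <| abs_sum_mul_le_mul_of_sum_abs_le _ hlhat
      (mul_nonneg ((matInfNorm_nonneg _).trans (hghat xb hxbσ)) huhat.le) fun k _ =>
        (abs_mulVec_le_matInfNorm_mul _ huhat.le hu k).trans
          (mul_le_mul_of_nonneg_right (hghat xb hxbσ) huhat.le)
  have hvert_avg : ∑ j, lam j * ∑ k, f (x j) k * w k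
      + lhat * ∑ j, lam j * (β * simplexConst x j) + lhat * (ghat * uhat) ≤ -b₂ := by
    have := Finset.sum_le_sum fun j (_ : j ∈ Finset.univ) =>
      mul_le_mul_of_nonneg_left (hvert j) (hlam0 j)
    simpa only [mul_add, Finset.sum_add_distrib, mul_left_comm (lam _) lhat, ← Finset.mul_sum,
      ← Finset.sum_mul, hlam1, one_mul, add_assoc] using this
  simp only [mul_add, Finset.sum_add_distrib]
  linarith

/-- if the barrier vertex conditions
`f(x_j)·w + l̂(β c_j + ĝ û) ≤ −b₂` hold, then `w·(f(x) + G(x)u) ≤ −b₂` on the whole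
simplex, for any input with `‖u‖_∞ ≤ û`. -/
theorem barrier_vertex_bound (n m : ℕ) (x : Fin (n + 1) → EuclideanSpace ℝ (Fin n))
    (hx : LinearIndependent ℝ (fun k : Fin n => x k.succ - x 0))
    (f : EuclideanSpace ℝ (Fin n) → (Fin n → ℝ)) (β : ℝ)
    (U : Set (EuclideanSpace ℝ (Fin n))) (hU : IsOpen U)
    (hσU : convexHull ℝ (Set.range x) ⊆ U)
    (hf : ContDiffOn ℝ 2 f U)
    (hβ : ∀ ξ ∈ convexHull ℝ (Set.range x), ∀ p q r : Fin n,
      |secondPartial (fun z => f z p) ξ q r| ≤ β)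
    (G : EuclideanSpace ℝ (Fin n) → Matrix (Fin n) (Fin m) ℝ)
    (hGcont : ∀ i j, Continuous fun z => G z i j)
    (ghat : ℝ) (hghat : ∀ z ∈ convexHull ℝ (Set.range x), matInfNorm (G z) ≤ ghat)
    (w : Fin n → ℝ) (lhat : ℝ) (hlhat : (∑ k, |w k|) ≤ lhat)
    (uhat b₂ : ℝ) (huhat : 0 < uhat)
    (hvert : ∀ j : Fin (n + 1),
      (∑ k, f (x j) k * w k) + lhat * (β * simplexConst x j + ghat * uhat) ≤ -b₂)
    (lam : Fin (n + 1) → ℝ) (hlam0 : ∀ j, 0 ≤ lam j) (hlam1 : ∑ j, lam j = 1)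
    (u : Fin m → ℝ) (hu : ∀ i, |u i| ≤ uhat) :
    (∑ k, w k * (f (∑ j, lam j • x j) k + (G (∑ j, lam j • x j)).mulVec u k)) ≤ -b₂ :=
  barrier_vertex_bound_general n m x f β U hU hσU hf hβ G ghat hghat w lhat hlhat uhat b₂ huhat
    hvert lam hlam0 hlam1 u hu
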